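/- Let κ₁ and κ₂ be the 3×3 stochastic matrices with rows (1/3, 2/3, 0), (0, 1/3, 2/3), (2/3, 0, 1/3) and (2/3, 1/3, 0), (0, 2/3, 1/3), (1/3, 0, 2/3) respectively. Then the intersection Z_{κ₁} ∩ Z_{κ₂} is not centrally symmetric-generated: it is not equal to Z_μ for any row-stochastic matrix μ with 3-element domain. -/

import Mathlib

def IsStochastic {X Y : Type*} [Fintype Y] (κ : Matrix X Y ℝ) : Prop :=
  (∀ x y, 0 ≤ κ x y) ∧ ∀ x, ∑ y, κ x y = 1

def zonotope {X Y : Type*} [Fintype Y] (κ : Matrix X Y ℝ) : Set (X → ℝ) :=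
  {v | ∃ a : Y → ℝ, (∀ y, a y ∈ Set.Icc (0:ℝ) 1) ∧ v = κ.mulVec a}

noncomputable def κ₁ : Matrix (Fin 3) (Fin 3) ℝ :=
  !![1/3, 2/3, 0; 0, 1/3, 2/3; 2/3, 0, 1/3]

noncomputable def κ₂ : Matrix (Fin 3) (Fin 3) ℝ :=
  !![2/3, 1/3, 0; 0, 2/3, 1/3; 1/3, 0, 2/3]

/-!
An exposed face of a zonotope `Z_μ` is again a zonotope, hence centrally symmetric: if `p = μ a`
maximises `c ⬝ᵥ ·`, the maximality forces `a y = 1` where `(c ᵥ* μ) y > 0` and `a y = 0` where it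
is `< 0`, so reflecting `a` in the remaining coordinates stays in the face. On the other hand the
face of `Z_{κ₁} ∩ Z_{κ₂}` maximising `p₀ - 2 p₁ + 4 p₂` is the triangle with vertices
`(2/3, 1/6, 2/3)`, `(1/3, 1/3, 5/6)` and `(1, 1, 1)`.
-/

open Matrix Set

def IsCentrallySymmetric {X : Type*} (S : Set (X → ℝ)) : Prop :=
  ∃ t, ∀ p ∈ S, t - p ∈ S

def maxFace {X : Type*} [Fintype X] (S : Set (X → ℝ)) (c : X → ℝ) : Set (X → ℝ) :=
  {p ∈ S | ∀ q ∈ S, c ⬝ᵥ q ≤ c ⬝ᵥ p}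

section Zonotope

variable {X Y : Type*} [Fintype X] [Fintype Y]

lemma eq_one_or_eq_zero_of_isMax_dotProduct {w a : Y → ℝ} (ha : ∀ y, a y ∈ Icc (0 : ℝ) 1)
    (hmax : ∀ b : Y → ℝ, (∀ y, b y ∈ Icc (0 : ℝ) 1) → w ⬝ᵥ b ≤ w ⬝ᵥ a) (y : Y) :
    (0 < w y → a y = 1) ∧ (w y < 0 → a y = 0) := by
  classical
  have hmove : ∀ s ∈ Icc (0 : ℝ) 1, w y * (s - a y) ≤ 0 := by
    intro s hs
    have hb : ∀ y', (a + Pi.single y (s - a y) : Y → ℝ) y' ∈ Icc (0 : ℝ) 1 := by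
      intro y'
      by_cases h : y' = y
      · subst h; simpa using hs
      · simpa [h] using ha y'
    have := hmax _ hb
    rw [dotProduct_add, dotProduct_single] at this
    linarith
  have h1 := hmove 1 ⟨zero_le_one, le_rfl⟩
  have h0 := hmove 0 ⟨le_rfl, zero_le_one⟩
  obtain ⟨ha0, ha1⟩ := ha y
  constructor
  · intro hw; nlinarith
  · intro hw; nlinarith

theorem isCentrallySymmetric_maxFace_zonotope (μ : Matrix X Y ℝ) (c : X → ℝ) :
    IsCentrallySymmetric (maxFace (zonotope μ) c) := by
  classical
  set w := c ᵥ* μ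
  -- `μ *ᵥ (τ / 2)` is the centre of the face
  let τ : Y → ℝ := fun y => if 0 < w y then 2 else if w y < 0 then 0 else 1
  refine ⟨μ *ᵥ τ, ?_⟩
  rintro _ ⟨⟨a, ha, rfl⟩, hmax⟩
  have hcoord := eq_one_or_eq_zero_of_isMax_dotProduct ha fun b hb => by
    simpa only [dotProduct_mulVec] using hmax _ ⟨b, hb, rfl⟩
  have hreflect : ∀ y, τ y - a y ∈ Icc (0 : ℝ) 1 ∧ w y * (τ y - a y) = w y * a y := by
    intro y
    obtain ⟨hpos, hneg⟩ := hcoord y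
    obtain ⟨ha0, ha1⟩ := ha y
    rcases lt_trichotomy (w y) 0 with h | h | h
    · norm_num [τ, h, h.not_gt, hneg h]
    · simp only [τ, h, lt_irrefl, if_false, mem_Icc, zero_mul, and_true]
      constructor <;> linarith
    · norm_num [τ, h, hpos h]
  have hval : c ⬝ᵥ (μ *ᵥ τ - μ *ᵥ a) = c ⬝ᵥ μ *ᵥ a := by
    rw [← mulVec_sub, dotProduct_mulVec, dotProduct_mulVec]
    exact Finset.sum_congr rfl fun y _ => (hreflect y).2
  exact ⟨⟨τ - a, fun y => (hreflect y).1, by rw [mulVec_sub]⟩, fun q hq => hval ▸ hmax q hq⟩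

end Zonotope

lemma κ₁_mulVec (a : Fin 3 → ℝ) :
    κ₁ *ᵥ a = ![(a 0 + 2 * a 1) / 3, (a 1 + 2 * a 2) / 3, (2 * a 0 + a 2) / 3] := by
  ext i; fin_cases i <;> simp [κ₁, mulVec, dotProduct, Fin.sum_univ_three] <;> ring

lemma κ₂_mulVec (a : Fin 3 → ℝ) :
    κ₂ *ᵥ a = ![(2 * a 0 + a 1) / 3, (2 * a 1 + a 2) / 3, (a 0 + 2 * a 2) / 3] := by
  ext i; fin_cases i <;> simp [κ₂, mulVec, dotProduct, Fin.sum_univ_three] <;> ring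

def faceNormal : Fin 3 → ℝ := ![1, -2, 4]

lemma faceNormal_dotProduct (p : Fin 3 → ℝ) : faceNormal ⬝ᵥ p = p 0 - 2 * p 1 + 4 * p 2 := by
  simp [faceNormal, dotProduct, Fin.sum_univ_three]
  ring

-- `faceNormal ᵥ* κ₁ = ![3, 0, 0]`
lemma faceNormal_dotProduct_le_of_mem_κ₁ {p : Fin 3 → ℝ} (hp : p ∈ zonotope κ₁) :
    faceNormal ⬝ᵥ p ≤ 3 := by
  obtain ⟨a, ha, rfl⟩ := hp
  simp only [faceNormal_dotProduct, κ₁_mulVec, cons_val]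
  linarith [(ha 0).2]

def triangle : Set (Fin 3 → ℝ) :=
  {p | p ∈ zonotope κ₁ ∩ zonotope κ₂ ∧ faceNormal ⬝ᵥ p = 3}

-- the half-planes bounded by the lines `PQ`, `PR` and `QR` through the vertices below
lemma triangle_bounds {p : Fin 3 → ℝ} (hp : p ∈ triangle) :
    2 ≤ p 0 + 2 * p 2 ∧ p 0 ≤ p 2 ∧ 4 * p 2 - p 0 ≤ 3 := by
  obtain ⟨⟨⟨a, ha, rfl⟩, b, hb, hab⟩, hp⟩ := hp
  rw [κ₁_mulVec, κ₂_mulVec] at hab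
  have e0 := congrFun hab 0
  have e1 := congrFun hab 1
  have e2 := congrFun hab 2
  simp only [faceNormal_dotProduct, κ₁_mulVec, cons_val] at hp e0 e1 e2 ⊢
  obtain ⟨⟨a0, a0'⟩, ⟨a1, a1'⟩, ⟨a2, a2'⟩⟩ := And.intro (ha 0) (And.intro (ha 1) (ha 2))
  obtain ⟨⟨b0, b0'⟩, ⟨b1, b1'⟩, ⟨b2, b2'⟩⟩ := And.intro (hb 0) (And.intro (hb 1) (hb 2))
  exact ⟨by linarith, by linarith, by linarith⟩

lemma vertexP_mem_triangle : ![2 / 3, 1 / 6, 2 / 3] ∈ triangle := by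
  refine ⟨⟨⟨![1, 1 / 2, 0], ?_, ?_⟩, ![1, 0, 1 / 2], ?_, ?_⟩, ?_⟩ <;>
    simp only [Fin.forall_fin_succ, IsEmpty.forall_iff, cons_val_succ, cons_val_zero, cons_val,
      κ₁_mulVec, κ₂_mulVec, faceNormal_dotProduct] <;> norm_num

lemma vertexQ_mem_triangle : ![1 / 3, 1 / 3, 5 / 6] ∈ triangle := by
  refine ⟨⟨⟨![1, 0, 1 / 2], ?_, ?_⟩, ![1 / 2, 0, 1], ?_, ?_⟩, ?_⟩ <;>
    simp only [Fin.forall_fin_succ, IsEmpty.forall_iff, cons_val_succ, cons_val_zero, cons_val,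
      κ₁_mulVec, κ₂_mulVec, faceNormal_dotProduct] <;> norm_num

lemma vertexR_mem_triangle : ![1, 1, 1] ∈ triangle := by
  refine ⟨⟨⟨![1, 1, 1], ?_, ?_⟩, ![1, 1, 1], ?_, ?_⟩, ?_⟩ <;>
    simp only [Fin.forall_fin_succ, IsEmpty.forall_iff, cons_val_succ, cons_val_zero, cons_val,
      κ₁_mulVec, κ₂_mulVec, faceNormal_dotProduct] <;> norm_num

lemma maxFace_inter_eq_triangle : maxFace (zonotope κ₁ ∩ zonotope κ₂) faceNormal = triangle := by
  ext p
  constructor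
  · rintro ⟨hp, hmax⟩
    exact ⟨hp, (faceNormal_dotProduct_le_of_mem_κ₁ hp.1).antisymm
      (vertexP_mem_triangle.2 ▸ hmax _ vertexP_mem_triangle.1)⟩
  · rintro ⟨hp, hp3⟩
    exact ⟨hp, fun q hq => hp3 ▸ faceNormal_dotProduct_le_of_mem_κ₁ hq.1⟩

theorem not_isCentrallySymmetric_triangle : ¬ IsCentrallySymmetric triangle := by
  rintro ⟨t, ht⟩
  have hP := triangle_bounds (ht _ vertexP_mem_triangle)
  have hQ := triangle_bounds (ht _ vertexQ_mem_triangle)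
  have hR := triangle_bounds (ht _ vertexR_mem_triangle)
  simp only [Pi.sub_apply, cons_val] at hP hQ hR
  linarith [hP.1, hP.2.1, hP.2.2, hQ.1, hQ.2.1, hQ.2.2, hR.1, hR.2.1, hR.2.2]

theorem intersection_not_a_zonotope :
    ¬ ∃ (n : ℕ) (μ : Matrix (Fin 3) (Fin n) ℝ),
        IsStochastic μ ∧ zonotope κ₁ ∩ zonotope κ₂ = zonotope μ := by
  rintro ⟨n, μ, -, hμ⟩
  have hsymm := isCentrallySymmetric_maxFace_zonotope μ faceNormal
  rw [← hμ, maxFace_inter_eq_triangle] at hsymm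
  exact not_isCentrallySymmetric_triangle hsymm
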